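/- arXiv:2208.01873 — 2 statements merged into one kernel-verified Lean document; each statement's English description precedes it below -/
import Mathlib

section
/- Let Ω ⊆ ℝ² be open and let v : ℝ² → ℝ be continuous, nonnegative, locally Lipschitz on Ω, and harmonic on the open set Ω ∩ {v > 0}. Then for every η ∈ C¹ with compact support in Ω, ∫_Ω ‖∇v‖² η dH² = −∫_Ω v ⟨∇v, ∇η⟩ dH², where ∇v is the H²-almost-everywhere defined gradient of v (which vanishes H²-a.e. on {v = 0}). (Integration-by-parts identity used in the proof of Lemma 2.2.) -/
open Set Topology MeasureTheory
open scoped RealInnerProductSpace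

noncomputable section

/-- Points of the Euclidean plane. -/
abbrev E2 := EuclideanSpace ℝ (Fin 2)

/-- `u` is harmonic on `U`: it is `C²` there with vanishing Laplacian. -/
def HarmonicOn (u : E2 → ℝ) (U : Set E2) : Prop :=
  ContDiffOn ℝ 2 u U ∧
  ∀ x ∈ U, (∑ i : Fin 2, fderiv ℝ (fun y => fderiv ℝ u y (EuclideanSpace.single i 1)) x
      (EuclideanSpace.single i 1)) = 0

section Auxiliary

open InnerProductSpace

instance E2po : PartialOrder E2 := PartialOrder.lift WithLp.ofLp (WithLp.ofLp_injective 2)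

lemma abs_coord_le (z : E2) (i : Fin 2) : |z i| ≤ ‖z‖ := by
  rw [EuclideanSpace.norm_eq z]
  rw [show |z i| = Real.sqrt (|z i|^2) by rw [Real.sqrt_sq_eq_abs, abs_abs]]
  apply Real.sqrt_le_sqrt
  exact Finset.single_le_sum (f := fun j => ‖z j‖^2) (fun j _ => by positivity) (Finset.mem_univ i)

lemma fderiv_zero_of_nmem_tsupport {F : Type*} [NormedAddCommGroup F] [NormedSpace ℝ F]
    {f : E2 → F} {x : E2} (h : x ∉ tsupport f) : fderiv ℝ f x = 0 := by
  have hev : f =ᶠ[𝓝 x] (fun _ => 0) := notMem_tsupport_iff_eventuallyEq.1 h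
  rw [hev.fderiv_eq, fderiv_fun_const]
  rfl

lemma integral_div_eq_zero (G : E2 → E2) (hG : ContDiff ℝ 1 G) (hc : HasCompactSupport G) :
    ∫ x : E2, ∑ i : Fin 2, fderiv ℝ G x (EuclideanSpace.single i 1) i = 0 := by
  obtain ⟨R0, hR0⟩ := hc.isCompact.isBounded.subset_closedBall 0
  set R : ℝ := max R0 0 with hRdef
  have hRnn : 0 ≤ R := le_max_right _ _
  have hR : tsupport G ⊆ Metric.closedBall 0 R :=
    hR0.trans (Metric.closedBall_subset_closedBall (le_max_left _ _))
  set a : E2 := WithLp.toLp 2 (fun _ => -(R+1)) with ha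
  set b : E2 := WithLp.toLp 2 (fun _ => (R+1)) with hb
  have hle : a ≤ b := fun i => by show -(R+1) ≤ R+1; linarith
  set DF : E2 → ℝ := fun x => ∑ i : Fin 2, fderiv ℝ G x (EuclideanSpace.single i 1) i with hDFdef
  have hGdiff : Differentiable ℝ G := hG.differentiable one_ne_zero
  have hDF0 : ∀ x : E2, x ∉ tsupport G → DF x = 0 := by
    intro x hx
    simp [hDFdef, fderiv_zero_of_nmem_tsupport hx]
  have hDFc : Continuous DF := by
    have h1 : Continuous (fderiv ℝ G) := (hG.fderiv_right (m := 0) (by norm_num)).continuous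
    apply continuous_finset_sum
    intro i _
    exact ((EuclideanSpace.proj i).continuous.comp
      ((ContinuousLinearMap.apply ℝ E2 (EuclideanSpace.single i 1)).continuous.comp h1))
  have hDFsupp : HasCompactSupport DF :=
    HasCompactSupport.intro hc.isCompact hDF0
  have key := integral_divergence_of_hasFDerivAt_off_countable_of_equiv
    (EuclideanSpace.equiv (Fin 2) ℝ) (fun _ _ => Iff.rfl)
    (EuclideanSpace.volume_preserving_symm_measurableEquiv_toLp (Fin 2))
    (fun i x => G x i)
    (fun i x => (EuclideanSpace.proj i).comp (fderiv ℝ G x))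
    ∅ countable_empty a b hle
    (fun i => ((EuclideanSpace.proj i).continuous.comp hG.continuous).continuousOn)
    (fun x _ i => by
      simpa [Function.comp_def] using
        (EuclideanSpace.proj i).hasFDerivAt.comp x (hGdiff x).hasFDerivAt)
    DF (fun x => rfl)
    (hDFc.integrable_of_hasCompactSupport hDFsupp).integrableOn
  have hfaces : ∀ (i : Fin 2) (c : ℝ), |c| = R + 1 →
      ∀ x : Fin 1 → ℝ, G ((EuclideanSpace.equiv (Fin 2) ℝ).symm (i.insertNth c x)) = 0 := by
    intro i c hcabs x
    set p : E2 := (EuclideanSpace.equiv (Fin 2) ℝ).symm (i.insertNth c x) with hp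
    have hpi : p i = c := by simp [hp]
    have hnm : ¬ p ∈ Metric.closedBall (0:E2) R := by
      intro hmem
      have h1 : ‖p‖ ≤ R := by simpa using hmem
      have h2 : |p i| ≤ R := (abs_coord_le p i).trans h1
      rw [hpi, hcabs] at h2
      linarith
    exact image_eq_zero_of_notMem_tsupport (fun hx => hnm (hR hx))
  rw [setIntegral_eq_integral_of_forall_compl_eq_zero (fun x hx => by
    apply hDF0
    intro hxs
    apply hx
    have hn : ‖x‖ ≤ R := by simpa using hR hxs
    refine ⟨fun i => ?_, fun i => ?_⟩
    · have := abs_le.1 ((abs_coord_le x i).trans hn)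
      show -(R+1) ≤ x i
      linarith [this.1]
    · have := abs_le.1 ((abs_coord_le x i).trans hn)
      show x i ≤ R+1
      linarith [this.2])] at key
  rw [key]
  apply Finset.sum_eq_zero
  intro i _
  have h1 : ∀ x : Fin 1 → ℝ, G ((EuclideanSpace.equiv (Fin 2) ℝ).symm
      (i.insertNth ((EuclideanSpace.equiv (Fin 2) ℝ) b i) x)) i = 0 := by
    intro x
    rw [hfaces i _ (by show |R+1| = R+1; rw [abs_of_nonneg]; linarith) x]
    rfl
  have h2 : ∀ x : Fin 1 → ℝ, G ((EuclideanSpace.equiv (Fin 2) ℝ).symm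
      (i.insertNth ((EuclideanSpace.equiv (Fin 2) ℝ) a i) x)) i = 0 := by
    intro x
    rw [hfaces i _ (by show |-(R+1)| = R+1; rw [abs_neg, abs_of_nonneg]; linarith) x]
    rfl
  simp only [h1, h2, integral_zero, sub_zero, sub_self]


def chi (s : ℝ) : ℝ := Real.smoothTransition (s - 1)

lemma chi_contDiff : ContDiff ℝ 1 chi := by
  have : ContDiff ℝ (1:ℕ∞) chi :=
    (Real.smoothTransition.contDiff).comp (contDiff_id.sub contDiff_const)
  exact_mod_cast this

lemma chi_continuous : Continuous chi := chi_contDiff.continuous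

lemma chi_nonneg (s : ℝ) : 0 ≤ chi s := Real.smoothTransition.nonneg _
lemma chi_le_one (s : ℝ) : chi s ≤ 1 := Real.smoothTransition.le_one _
lemma chi_of_le_one {s : ℝ} (h : s ≤ 1) : chi s = 0 :=
  Real.smoothTransition.zero_of_nonpos (by linarith)
lemma chi_of_two_le {s : ℝ} (h : 2 ≤ s) : chi s = 1 :=
  Real.smoothTransition.one_of_one_le (by linarith)

def phi (ε t : ℝ) : ℝ := ∫ s in (0:ℝ)..t, chi (s/ε)

section Phi
variable {ε : ℝ} (hε : 0 < ε)

lemma hasDerivAt_phi (t : ℝ) : HasDerivAt (phi ε) (chi (t/ε)) t :=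
  ((chi_continuous.comp (continuous_id.div_const ε)).integral_hasStrictDerivAt 0 t).hasDerivAt

lemma phi_contDiff : ContDiff ℝ 1 (phi ε) := by
  rw [contDiff_one_iff_deriv]
  have hd : ∀ t, HasDerivAt (phi ε) (chi (t/ε)) t := hasDerivAt_phi
  constructor
  · exact fun t => (hd t).differentiableAt
  · have : deriv (phi ε) = fun t => chi (t/ε) := funext fun t => (hd t).deriv
    rw [this]
    exact chi_continuous.comp (continuous_id.div_const ε)

include hε

lemma phi_nonneg {t : ℝ} (ht : 0 ≤ t) : 0 ≤ phi ε t :=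
  intervalIntegral.integral_nonneg ht (fun s _ => chi_nonneg _)

lemma phi_le {t : ℝ} (ht : 0 ≤ t) : phi ε t ≤ t := by
  have := intervalIntegral.integral_mono_on (μ := volume) (f := fun s => chi (s/ε))
    (g := fun _ => (1:ℝ)) ht
    ((chi_continuous.comp (continuous_id.div_const ε)).intervalIntegrable 0 t)
    (intervalIntegrable_const)
    (fun s _ => chi_le_one _)
  simpa [phi] using this

omit hε in
lemma chi_div_continuous : Continuous (fun s : ℝ => chi (s / ε)) :=
  chi_continuous.comp (continuous_id.div_const ε)

lemma phi_eq_zero {t : ℝ} (ht : t ≤ ε) : phi ε t = 0 := by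
  have hEq : EqOn (fun s : ℝ => chi (s/ε)) (fun _ => (0:ℝ)) (uIcc 0 t) := by
    intro s hs
    rcases le_total 0 t with h0 | h0
    · rw [uIcc_of_le h0] at hs
      exact chi_of_le_one (by rw [div_le_one hε]; linarith [hs.2])
    · rw [uIcc_of_ge h0] at hs
      have h1 : s ≤ 0 := hs.2
      have h2 : s / ε ≤ 0 := div_nonpos_of_nonpos_of_nonneg h1 hε.le
      exact chi_of_le_one (by linarith)
  show (∫ s in (0:ℝ)..t, chi (s/ε)) = 0
  rw [intervalIntegral.integral_congr hEq, intervalIntegral.integral_zero]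

lemma phi_ge {t : ℝ} (ht : 0 ≤ t) : t - 2*ε ≤ phi ε t := by
  rcases le_total t (2*ε) with h | h
  · have := phi_nonneg hε ht
    linarith
  · have hsplit : phi ε t = (∫ s in (0:ℝ)..(2*ε), chi (s/ε)) + ∫ s in (2*ε)..t, chi (s/ε) := by
      rw [phi]
      rw [← intervalIntegral.integral_add_adjacent_intervals
        ((chi_div_continuous (ε := ε)).intervalIntegrable 0 (2*ε))
        ((chi_div_continuous (ε := ε)).intervalIntegrable (2*ε) t)]
    have h1 : 0 ≤ ∫ s in (0:ℝ)..(2*ε), chi (s/ε) :=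
      intervalIntegral.integral_nonneg (by linarith) (fun s _ => chi_nonneg _)
    have h2 : (∫ s in (2*ε)..t, chi (s/ε)) = t - 2*ε := by
      have : ∀ s ∈ uIcc (2*ε) t, chi (s/ε) = 1 := by
        intro s hs
        rw [uIcc_of_le h] at hs
        exact chi_of_two_le (by rw [le_div_iff₀ hε]; linarith [hs.1])
      rw [intervalIntegral.integral_congr this]
      simp
    rw [hsplit, h2]
    linarith


end Phi

lemma inner_gradient (f : E2 → ℝ) (x h : E2) : ⟪gradient f x, h⟫ = fderiv ℝ f x h := by
  simp [gradient]

lemma gradient_coord (f : E2 → ℝ) (x : E2) (i : Fin 2) :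
    gradient f x i = fderiv ℝ f x (EuclideanSpace.single i 1) := by
  rw [← inner_gradient, EuclideanSpace.inner_single_right]
  simp

lemma norm_grad_sq (f : E2 → ℝ) (x : E2) :
    ‖gradient f x‖^2 = ∑ i : Fin 2, fderiv ℝ f x (EuclideanSpace.single i 1) ^ 2 := by
  have h := EuclideanSpace.norm_eq (gradient f x)
  rw [h, Real.sq_sqrt (by positivity)]
  exact Finset.sum_congr rfl fun i _ => by rw [Real.norm_eq_abs, sq_abs, gradient_coord]

lemma inner_grad_eq (f g : E2 → ℝ) (x : E2) :
    ⟪gradient f x, gradient g x⟫ =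
      ∑ i : Fin 2, fderiv ℝ f x (EuclideanSpace.single i 1) *
        fderiv ℝ g x (EuclideanSpace.single i 1) := by
  rw [PiLp.inner_apply]
  exact Finset.sum_congr rfl fun i _ => by
    rw [gradient_coord, gradient_coord]; simp [mul_comm]

lemma norm_gradient_eq (f : E2 → ℝ) (x : E2) : ‖gradient f x‖ = ‖fderiv ℝ f x‖ := by
  rw [gradient]
  exact LinearIsometryEquiv.norm_map _ _

lemma measurable_gradient (f : E2 → ℝ) : Measurable (gradient f) :=
  (LinearIsometryEquiv.continuous _).measurable.comp (measurable_fderiv ℝ f)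

lemma gradient_zero_of_nmem_tsupport {f : E2 → ℝ} {x : E2} (h : x ∉ tsupport f) :
    gradient f x = 0 := by
  have hev : f =ᶠ[𝓝 x] (fun _ => 0) := notMem_tsupport_iff_eventuallyEq.1 h
  rw [gradient, hev.fderiv_eq, fderiv_fun_const]
  simp

-- gradient vanishes at global minima
lemma gradient_zero_of_min {v : E2 → ℝ} (hnn : ∀ y, 0 ≤ v y) {x : E2} (hx : v x = 0) :
    gradient v x = 0 := by
  have hmin : IsLocalMin v x := Filter.Eventually.of_forall (fun y => by rw [hx]; exact hnn y)
  rw [gradient, hmin.fderiv_eq_zero]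
  simp

-- uniform bound for the gradient on a compact subset of Ω
lemma grad_bound {Ω : Set E2} (hΩ : IsOpen Ω) {v : E2 → ℝ} (hlip : LocallyLipschitzOn Ω v)
    {K : Set E2} (hK : IsCompact K) (hKΩ : K ⊆ Ω) :
    ∃ C : ℝ, 0 ≤ C ∧ ∀ y ∈ K, ‖gradient v y‖ ≤ C := by
  -- for each x ∈ K pick an open nbhd on whose points the fderiv is bounded
  have hnb : ∀ x ∈ K, ∃ (C : ℝ) (U : Set E2), IsOpen U ∧ x ∈ U ∧ 0 ≤ C ∧
      ∀ y ∈ U, ‖gradient v y‖ ≤ C := by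
    intro x hxK
    obtain ⟨L, t, ht, hL⟩ := hlip (hKΩ hxK)
    have htx : t ∈ 𝓝 x := by
      rw [nhdsWithin_eq_nhds.2 (hΩ.mem_nhds (hKΩ hxK))] at ht
      exact ht
    refine ⟨L, interior t, isOpen_interior, mem_interior_iff_mem_nhds.2 htx, L.coe_nonneg, ?_⟩
    intro y hy
    rw [norm_gradient_eq]
    exact norm_fderiv_le_of_lipschitzOn ℝ (mem_interior_iff_mem_nhds.1 hy) hL
  choose! C U hUopen hxU hC0 hCb using hnb
  rcases hK.elim_finite_subcover (fun x : K => U x) (fun x => hUopen x x.2)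
    (fun y hy => mem_iUnion.2 ⟨⟨y, hy⟩, hxU y hy⟩) with ⟨F, hF⟩
  refine ⟨∑ x ∈ F, C x, Finset.sum_nonneg (fun x hx => hC0 x x.2), ?_⟩
  intro y hy
  obtain ⟨x, hxF, hyU⟩ := Set.mem_iUnion₂.1 (hF hy)
  calc ‖gradient v y‖ ≤ C x := hCb x.1 x.2 y hyU
    _ ≤ ∑ x ∈ F, C x := Finset.single_le_sum (fun z _ => hC0 z.1 z.2) hxF


def dualToE2 : StrongDual ℝ E2 →L[ℝ] E2 where
  toFun := (InnerProductSpace.toDual ℝ E2).symm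
  map_add' := map_add _
  map_smul' := fun r x => by
    simpa using (InnerProductSpace.toDual ℝ E2).symm.map_smulₛₗ r x
  cont := (InnerProductSpace.toDual ℝ E2).symm.continuous

lemma gradient_eq_dual (f : E2 → ℝ) : gradient f = fun y => dualToE2 (fderiv ℝ f y) := rfl
end Auxiliary
section Key

lemma key_identity (Ω : Set E2) (hΩ : IsOpen Ω) (v : E2 → ℝ) (hv : Continuous v)
    (hnn : ∀ y, 0 ≤ v y) (hharm : HarmonicOn v (Ω ∩ {y | 0 < v y}))
    (η : E2 → ℝ) (hη : ContDiff ℝ 1 η) (hηc : HasCompactSupport η) (hηΩ : tsupport η ⊆ Ω)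
    {ε : ℝ} (hε : 0 < ε) :
    ∫ y : E2, (chi (v y / ε) * (η y * ‖gradient v y‖^2) +
      phi ε (v y) * ⟪gradient v y, gradient η y⟫) = 0 := by
  set U : Set E2 := Ω ∩ {y | 0 < v y} with hUdef
  have hUopen : IsOpen U := hΩ.inter (isOpen_lt continuous_const hv)
  have hv2 : ContDiffOn ℝ 2 v U := hharm.1
  have hv1 : ContDiffOn ℝ 1 v U := hv2.of_le (by norm_num)
  have hGvU : ContDiffOn ℝ 1 (gradient v) U := by
    have h1 : ContDiffOn ℝ 1 (fderiv ℝ v) U := hv2.fderiv_of_isOpen hUopen (by norm_num)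
    rw [gradient_eq_dual]
    exact dualToE2.contDiff.comp_contDiffOn h1
  set ρ : E2 → ℝ := fun y => phi ε (v y) * η y with hρdef
  set W : E2 → E2 := fun y => ρ y • gradient v y with hWdef
  -- W vanishes near points not in U
  have hWev : ∀ x : E2, x ∉ U → W =ᶠ[𝓝 x] (fun _ => 0) := by
    intro x hxU
    by_cases hvx : v x < ε
    · have hmem : {y : E2 | v y < ε} ∈ 𝓝 x := (isOpen_lt hv continuous_const).mem_nhds hvx
      filter_upwards [hmem] with y hy
      simp [hWdef, hρdef, phi_eq_zero hε (le_of_lt hy)]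
    · have hxΩ : x ∉ Ω := by
        intro hxΩ
        exact hxU ⟨hxΩ, lt_of_lt_of_le hε (not_lt.1 hvx)⟩
      have hxsupp : x ∉ tsupport η := fun h => hxΩ (hηΩ h)
      have hmem : (tsupport η)ᶜ ∈ 𝓝 x :=
        (isClosed_tsupport η).isOpen_compl.mem_nhds hxsupp
      filter_upwards [hmem] with y hy
      simp [hWdef, hρdef, image_eq_zero_of_notMem_tsupport hy]
  have hWU : ContDiffOn ℝ 1 W U :=
    (((phi_contDiff (ε := ε)).comp_contDiffOn hv1).mul (hη.contDiffOn)).smul hGvU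
  have hW1 : ContDiff ℝ 1 W := by
    rw [contDiff_iff_contDiffAt]
    intro x
    by_cases hxU : x ∈ U
    · exact hWU.contDiffAt (hUopen.mem_nhds hxU)
    · exact contDiffAt_const.congr_of_eventuallyEq (hWev x hxU)
  have hWsupp : HasCompactSupport W :=
    HasCompactSupport.intro hηc.isCompact (fun x hx => by
      simp [hWdef, hρdef, image_eq_zero_of_notMem_tsupport hx])
  -- divergence computation
  have hdiv : ∀ x : E2, ∑ i : Fin 2, fderiv ℝ W x (EuclideanSpace.single i 1) i
      = chi (v x / ε) * (η x * ‖gradient v x‖^2) +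
        phi ε (v x) * ⟪gradient v x, gradient η x⟫ := by
    intro x
    by_cases hxU : x ∈ U
    · -- differentiable case
      have hdv : HasFDerivAt v (fderiv ℝ v x) x :=
        ((hv1.differentiableOn one_ne_zero).differentiableAt (hUopen.mem_nhds hxU)).hasFDerivAt
      have hGvd : DifferentiableAt ℝ (gradient v) x :=
        (hGvU.differentiableOn one_ne_zero).differentiableAt (hUopen.mem_nhds hxU)
      have hdφv : HasFDerivAt (fun y => phi ε (v y)) (chi (v x / ε) • fderiv ℝ v x) x :=
        (hasDerivAt_phi (v x)).comp_hasFDerivAt x hdv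
      have hdη : HasFDerivAt η (fderiv ℝ η x) x :=
        ((hη.differentiable one_ne_zero) x).hasFDerivAt
      have hρd : HasFDerivAt ρ
          (phi ε (v x) • fderiv ℝ η x + η x • (chi (v x / ε) • fderiv ℝ v x)) x :=
        hdφv.mul hdη
      have hWd : HasFDerivAt W
          (ρ x • fderiv ℝ (gradient v) x +
            (phi ε (v x) • fderiv ℝ η x + η x • (chi (v x / ε) • fderiv ℝ v x)).smulRight
              (gradient v x)) x :=
        hρd.smul hGvd.hasFDerivAt
      rw [hWd.fderiv]
      -- Laplacian term vanishes
      have hlap : ∑ i : Fin 2, fderiv ℝ (gradient v) x (EuclideanSpace.single i 1) i = 0 := by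
        have hco : ∀ i : Fin 2, fderiv ℝ (gradient v) x (EuclideanSpace.single i 1) i =
            fderiv ℝ (fun y => fderiv ℝ v y (EuclideanSpace.single i 1)) x
              (EuclideanSpace.single i 1) := by
          intro i
          have h2 : HasFDerivAt (fun y => gradient v y i)
              ((EuclideanSpace.proj i).comp (fderiv ℝ (gradient v) x)) x := by
            simpa [Function.comp_def] using
              (EuclideanSpace.proj (𝕜 := ℝ) i).hasFDerivAt.comp x hGvd.hasFDerivAt
          have h1 : (fun y => gradient v y i) =
              (fun y => fderiv ℝ v y (EuclideanSpace.single i 1)) :=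
            funext (fun y => gradient_coord v y i)
          calc fderiv ℝ (gradient v) x (EuclideanSpace.single i 1) i
              = fderiv ℝ (fun y => gradient v y i) x (EuclideanSpace.single i 1) := by
                rw [h2.fderiv]; rfl
            _ = fderiv ℝ (fun y => fderiv ℝ v y (EuclideanSpace.single i 1)) x
                (EuclideanSpace.single i 1) := by rw [h1]
        rw [Finset.sum_congr rfl (fun i _ => hco i)]
        exact hharm.2 x hxU
      have hns := norm_grad_sq v x
      have hig := inner_grad_eq v η x
      have hgc0 := gradient_coord v x 0
      have hgc1 := gradient_coord v x 1
      have hgη0 : gradient η x 0 = fderiv ℝ η x (EuclideanSpace.single 0 1) :=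
        gradient_coord η x 0
      have hgη1 : gradient η x 1 = fderiv ℝ η x (EuclideanSpace.single 1 1) :=
        gradient_coord η x 1
      simp only [ContinuousLinearMap.add_apply, ContinuousLinearMap.smul_apply,
        ContinuousLinearMap.smulRight_apply, PiLp.add_apply, PiLp.smul_apply,
        smul_eq_mul, Fin.sum_univ_two] at hlap hns hig ⊢
      rw [hns, hig, hgc0, hgc1]
      linear_combination (ρ x) * hlap
    · -- W vanishes near x
      have hfd : fderiv ℝ W x = 0 := by
        rw [(hWev x hxU).fderiv_eq, fderiv_fun_const]
        rfl
      rw [hfd]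
      simp only [ContinuousLinearMap.zero_apply]
      have hrhs : chi (v x / ε) * (η x * ‖gradient v x‖^2) +
          phi ε (v x) * ⟪gradient v x, gradient η x⟫ = 0 := by
        by_cases hvx : v x < ε
        · rw [chi_of_le_one (by rw [div_le_one hε]; linarith),
            phi_eq_zero hε (le_of_lt hvx)]
          ring
        · have hxΩ : x ∉ Ω := fun hxΩ =>
            hxU ⟨hxΩ, lt_of_lt_of_le hε (not_lt.1 hvx)⟩
          have hxsupp : x ∉ tsupport η := fun h => hxΩ (hηΩ h)
          rw [image_eq_zero_of_notMem_tsupport hxsupp, gradient_zero_of_nmem_tsupport hxsupp]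
          simp
      rw [hrhs]
      simp
  calc ∫ y : E2, (chi (v y / ε) * (η y * ‖gradient v y‖^2) +
          phi ε (v y) * ⟪gradient v y, gradient η y⟫)
      = ∫ y : E2, ∑ i : Fin 2, fderiv ℝ W y (EuclideanSpace.single i 1) i := by
        exact integral_congr_ae (Filter.Eventually.of_forall (fun y => (hdiv y).symm))
    _ = 0 := integral_div_eq_zero W hW1 hWsupp

end Key

/-- Integration-by-parts identity used in the proof of Lemma 2.2. -/
theorem integration_by_parts_identity
    (Ω : Set E2) (hΩ : IsOpen Ω)
    (v : E2 → ℝ) (hv : Continuous v) (hnn : ∀ y, 0 ≤ v y)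
    (hlip : LocallyLipschitzOn Ω v)
    (hharm : HarmonicOn v (Ω ∩ {y | 0 < v y})) :
    ∀ η : E2 → ℝ, ContDiff ℝ 1 η → HasCompactSupport η → tsupport η ⊆ Ω →
      ∫ y in Ω, ‖gradient v y‖ ^ 2 * η y =
        -∫ y in Ω, v y * ⟪gradient v y, gradient η y⟫ := by
  intro η hη hηc hηΩ
  set K : Set E2 := tsupport η with hKdef
  -- uniform bound on the gradient of v on K
  obtain ⟨C, hC0, hCb⟩ := grad_bound hΩ hlip hηc.isCompact hηΩ
  -- bound on v on K
  obtain ⟨M0, hM0⟩ := hηc.isCompact.exists_bound_of_continuousOn hv.continuousOn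
  set M : ℝ := max M0 0 with hMdef
  have hMb : ∀ y ∈ K, v y ≤ M := fun y hy =>
    (le_abs_self _).trans ((hM0 y hy).trans (le_max_left _ _))
  have hM0' : 0 ≤ M := le_max_right _ _
  -- the gradient of η
  have hGηcont : Continuous (gradient η) := by
    rw [gradient_eq_dual]
    exact dualToE2.continuous.comp (contDiff_one_iff_fderiv.1 hη).2
  have hGηsupp : HasCompactSupport (gradient η) :=
    HasCompactSupport.intro hηc.isCompact (fun x hx => gradient_zero_of_nmem_tsupport hx)
  have hGη0 : ∀ y, y ∉ K → gradient η y = 0 := fun y hy => gradient_zero_of_nmem_tsupport hy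
  have hη0 : ∀ y, y ∉ K → η y = 0 := fun y hy => image_eq_zero_of_notMem_tsupport hy
  -- the sequence of approximations
  set ε : ℕ → ℝ := fun n => ((n : ℝ) + 1)⁻¹ with hεdef
  have hεpos : ∀ n, 0 < ε n := fun n => by positivity
  set A : ℕ → E2 → ℝ := fun n y => chi (v y / ε n) * (η y * ‖gradient v y‖^2) with hAdef
  set B : ℕ → E2 → ℝ := fun n y => phi (ε n) (v y) * ⟪gradient v y, gradient η y⟫ with hBdef
  set F : E2 → ℝ := fun y => η y * ‖gradient v y‖^2 with hFdef
  set G : E2 → ℝ := fun y => v y * ⟪gradient v y, gradient η y⟫ with hGdef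
  -- measurability
  have hGvmeas : Measurable (gradient v) := measurable_gradient v
  have hAmeas : ∀ n, AEStronglyMeasurable (A n) volume := by
    intro n
    apply Measurable.aestronglyMeasurable
    exact ((chi_continuous.comp ((hv.div_const (ε n)))).measurable).mul
      ((hη.continuous.measurable).mul (hGvmeas.norm.pow_const 2))
  have hBmeas : ∀ n, AEStronglyMeasurable (B n) volume := by
    intro n
    apply Measurable.aestronglyMeasurable
    exact (((phi_contDiff (ε := ε n)).continuous.comp hv).measurable).mul
      (hGvmeas.inner hGηcont.measurable)
  -- bounds
  set bndA : E2 → ℝ := fun y => C^2 * |η y| with hbndAdef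
  have hbA : ∀ n, ∀ y, ‖A n y‖ ≤ bndA y := by
    intro n y
    by_cases hy : y ∈ K
    · have h1 : ‖gradient v y‖ ≤ C := hCb y hy
      have h2 : ‖gradient v y‖^2 ≤ C^2 := by nlinarith [norm_nonneg (gradient v y)]
      rw [Real.norm_eq_abs, hAdef, abs_mul, abs_mul]
      calc |chi (v y / ε n)| * (|η y| * |‖gradient v y‖^2|) ≤
            1 * (|η y| * C^2) := by
            apply mul_le_mul
            · rw [abs_of_nonneg (chi_nonneg _)]; exact chi_le_one _
            · apply mul_le_mul_of_nonneg_left _ (abs_nonneg _)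
              rw [abs_of_nonneg (by positivity)]; exact h2
            · positivity
            · norm_num
        _ = bndA y := by rw [hbndAdef]; ring
    · rw [hAdef, hbndAdef]
      simp [hη0 y hy]
  have hbndAint : Integrable bndA volume := by
    apply Integrable.const_mul
    exact (hη.continuous.abs.integrable_of_hasCompactSupport hηc.abs)
  set bndB : E2 → ℝ := fun y => (M * C) * ‖gradient η y‖ with hbndBdef
  have hbB : ∀ n, ∀ y, ‖B n y‖ ≤ bndB y := by
    intro n y
    by_cases hy : y ∈ K
    · have h1 : ‖gradient v y‖ ≤ C := hCb y hy
      have h2 : |phi (ε n) (v y)| ≤ M := by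
        rw [abs_of_nonneg (phi_nonneg (hεpos n) (hnn y))]
        exact (phi_le (hεpos n) (hnn y)).trans (hMb y hy)
      rw [Real.norm_eq_abs, hBdef, abs_mul]
      calc |phi (ε n) (v y)| * |⟪gradient v y, gradient η y⟫| ≤
            M * (C * ‖gradient η y‖) := by
            apply mul_le_mul h2 _ (abs_nonneg _) hM0'
            calc |⟪gradient v y, gradient η y⟫| ≤ ‖gradient v y‖ * ‖gradient η y‖ :=
                  abs_real_inner_le_norm _ _
              _ ≤ C * ‖gradient η y‖ := by
                  apply mul_le_mul_of_nonneg_right h1 (norm_nonneg _)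
        _ = bndB y := by rw [hbndBdef]; ring
    · rw [hBdef, hbndBdef]
      simp [hGη0 y hy]
  have hbndBint : Integrable bndB volume := by
    apply Integrable.const_mul
    exact (hGηcont.norm.integrable_of_hasCompactSupport hGηsupp.norm)
  -- integrability of A n and B n
  have hAint : ∀ n, Integrable (A n) volume := fun n =>
    Integrable.mono' hbndAint (hAmeas n) (Filter.Eventually.of_forall (hbA n))
  have hBint : ∀ n, Integrable (B n) volume := fun n =>
    Integrable.mono' hbndBint (hBmeas n) (Filter.Eventually.of_forall (hbB n))
  -- the key identity for each n
  have hkey : ∀ n, ∫ y : E2, A n y = - ∫ y : E2, B n y := by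
    intro n
    have h0 := key_identity Ω hΩ v hv hnn hharm η hη hηc hηΩ (hεpos n)
    rw [integral_add (hAint n) (hBint n)] at h0
    linarith
  -- convergence of the A-integrals
  have hAtend : Filter.Tendsto (fun n => ∫ y : E2, A n y) Filter.atTop (𝓝 (∫ y : E2, F y)) := by
    apply tendsto_integral_of_dominated_convergence bndA hAmeas hbndAint
      (fun n => Filter.Eventually.of_forall (hbA n))
    apply Filter.Eventually.of_forall
    intro y
    rcases eq_or_lt_of_le (hnn y) with h0 | h0
    · have hgz : gradient v y = 0 := gradient_zero_of_min hnn h0.symm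
      have : ∀ n, A n y = F y := by
        intro n
        rw [hAdef, hFdef]
        simp [hgz, ← h0]
      simpa [this] using tendsto_const_nhds
    · have hev : ∀ᶠ n in Filter.atTop, A n y = F y := by
        rw [Filter.eventually_atTop]
        refine ⟨⌈2 / v y⌉₊, fun n hn => ?_⟩
        have h2 : 2 / v y ≤ (n : ℝ) := (Nat.ceil_le.1 hn).trans (le_refl _) |>.trans (by norm_num) |>.trans (le_refl _)
        have h3 : (2:ℝ) ≤ v y / ε n := by
          rw [hεdef]
          simp only [div_inv_eq_mul]
          rw [div_le_iff₀ h0] at h2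
          nlinarith [hnn y]
        show chi (v y / ε n) * (η y * ‖gradient v y‖ ^ 2) = η y * ‖gradient v y‖ ^ 2
        rw [chi_of_two_le h3, one_mul]
      exact Filter.Tendsto.congr' (hev.mono fun n h => h.symm) tendsto_const_nhds
  -- convergence of the B-integrals
  have hBtend : Filter.Tendsto (fun n => ∫ y : E2, B n y) Filter.atTop (𝓝 (∫ y : E2, G y)) := by
    apply tendsto_integral_of_dominated_convergence bndB hBmeas hbndBint
      (fun n => Filter.Eventually.of_forall (hbB n))
    apply Filter.Eventually.of_forall
    intro y
    have hεtend : Filter.Tendsto ε Filter.atTop (𝓝 0) := by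
      rw [hεdef]
      exact tendsto_one_div_add_atTop_nhds_zero_nat.congr (fun n => by rw [one_div])
    have hphit : Filter.Tendsto (fun n => phi (ε n) (v y)) Filter.atTop (𝓝 (v y)) := by
      apply tendsto_of_tendsto_of_tendsto_of_le_of_le
        (g := fun n => v y - 2 * ε n) (h := fun _ => v y)
      · have : Filter.Tendsto (fun n => v y - 2 * ε n) Filter.atTop (𝓝 (v y - 2 * 0)) :=
          (tendsto_const_nhds.sub (hεtend.const_mul 2))
        simpa using this
      · exact tendsto_const_nhds
      · exact fun n => phi_ge (hεpos n) (hnn y)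
      · exact fun n => phi_le (hεpos n) (hnn y)
    exact hphit.mul_const _
  -- pass to the limit
  have hFG : ∫ y : E2, F y = - ∫ y : E2, G y := by
    have h1 : Filter.Tendsto (fun n => ∫ y : E2, A n y) Filter.atTop
        (𝓝 (- ∫ y : E2, G y)) := by
      rw [show (fun n => ∫ y : E2, A n y) = fun n => - ∫ y : E2, B n y from funext hkey]
      exact hBtend.neg
    exact tendsto_nhds_unique hAtend h1
  -- convert set integrals to integrals over the whole space
  have hL : ∫ y in Ω, ‖gradient v y‖ ^ 2 * η y = ∫ y : E2, F y := by
    rw [setIntegral_eq_integral_of_forall_compl_eq_zero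
      (fun y hy => by simp [hη0 y (fun h => hy (hηΩ h))])]
    exact integral_congr_ae (Filter.Eventually.of_forall (fun y => by rw [hFdef]; ring))
  have hR : ∫ y in Ω, v y * ⟪gradient v y, gradient η y⟫ = ∫ y : E2, G y := by
    rw [setIntegral_eq_integral_of_forall_compl_eq_zero
      (fun y hy => by simp [hGη0 y (fun h => hy (hηΩ h))])]
  rw [hL, hR, hFG]
end
end

section
/- Let Ω ⊆ ℝ² be open and let u : ℝ² → ℝ be continuous, nonnegative, locally Lipschitz on Ω, and harmonic on the open set Ω ∩ {u > 0}. Then u is distributionally subharmonic on Ω: for every φ ∈ C_c^∞(Ω) with φ ≥ 0, −∫_Ω ⟨∇u, ∇φ⟩ dH² ≥ 0. (Claim from Section 2.1 that Δu defines a non-negative Radon measure.) -/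
open Set Topology MeasureTheory
open scoped RealInnerProductSpace

noncomputable section

lemma expNegInvGlue_mono : Monotone expNegInvGlue := by
  intro a b hab
  rcases le_or_gt b 0 with hb | hb
  · rw [expNegInvGlue.zero_of_nonpos (hab.trans hb), expNegInvGlue.zero_of_nonpos hb]
  rcases le_or_gt a 0 with ha | ha
  · rw [expNegInvGlue.zero_of_nonpos ha]; exact expNegInvGlue.nonneg b
  · simp only [expNegInvGlue, if_neg (not_le.2 ha), if_neg (not_le.2 hb)]
    exact Real.exp_le_exp.2 (neg_le_neg (inv_anti₀ ha hab))

lemma smoothTransition_mono : Monotone Real.smoothTransition := by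
  intro a b hab
  unfold Real.smoothTransition
  rw [div_le_div_iff₀ (Real.smoothTransition.pos_denom a) (Real.smoothTransition.pos_denom b)]
  have h1 : expNegInvGlue a ≤ expNegInvGlue b := expNegInvGlue_mono hab
  have h2 : expNegInvGlue (1-b) ≤ expNegInvGlue (1-a) := expNegInvGlue_mono (by linarith)
  nlinarith [expNegInvGlue.nonneg a, expNegInvGlue.nonneg b,
    expNegInvGlue.nonneg (1-a), expNegInvGlue.nonneg (1-b)]

lemma monotone_deriv_nonneg {f : ℝ → ℝ} (hf : Monotone f) (s : ℝ) : 0 ≤ deriv f s := by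
  by_cases hd : DifferentiableAt ℝ f s
  · have h := (hd.hasDerivAt.hasDerivWithinAt (s := Ioi s))
    rw [hasDerivWithinAt_iff_tendsto_slope] at h
    have heq : Ioi s \ {s} = Ioi s := Set.diff_singleton_eq_self (by simp)
    rw [heq] at h
    refine ge_of_tendsto h ?_
    filter_upwards [self_mem_nhdsWithin] with t ht
    rw [slope_def_field]
    exact div_nonneg (sub_nonneg.2 (hf (le_of_lt ht))) (sub_nonneg.2 (le_of_lt ht))
  · rw [deriv_zero_of_not_differentiableAt hd]

lemma inner_gradient_eq (f : E2 → ℝ) (y : E2) (v : E2) :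
    ⟪gradient f y, v⟫ = fderiv ℝ f y v := by
  rw [gradient, InnerProductSpace.toDual_symm_apply]

lemma grad_coord (f : E2 → ℝ) (y : E2) (i : Fin 2) :
    gradient f y i = fderiv ℝ f y (EuclideanSpace.single i 1) := by
  rw [← inner_gradient_eq, real_inner_comm, EuclideanSpace.inner_single_left]
  simp

lemma inner_grad_grad (f g : E2 → ℝ) (y : E2) :
    ⟪gradient f y, gradient g y⟫ =
      ∑ i : Fin 2, fderiv ℝ f y (EuclideanSpace.single i 1) *
        fderiv ℝ g y (EuclideanSpace.single i 1) := by
  rw [PiLp.inner_apply]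
  refine Finset.sum_congr rfl fun i _ => ?_
  rw [grad_coord, grad_coord]
  simp [RCLike.inner_apply]
  ring

lemma gradient_zero_at_min {u : E2 → ℝ} (hnn : ∀ y, 0 ≤ u y) {y : E2} (hy : u y = 0) :
    gradient u y = 0 := by
  have h : IsLocalMin u y := Filter.Eventually.of_forall (fun z => hy ▸ hnn z)
  rw [gradient, h.fderiv_eq_zero]
  simp

lemma fderiv_bound_on_compact {Ω : Set E2} (hΩ : IsOpen Ω) {u : E2 → ℝ}
    (hlip : LocallyLipschitzOn Ω u) {K : Set E2} (hK : IsCompact K) (hKΩ : K ⊆ Ω) :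
    ∃ C : ℝ, 0 ≤ C ∧ ∀ y ∈ K, ‖fderiv ℝ u y‖ ≤ C := by
  have H : ∀ x : E2, x ∈ K → ∃ s : Set E2, s ∈ 𝓝 x ∧ ∃ C : ℝ, ∀ y ∈ s, ‖fderiv ℝ u y‖ ≤ C := by
    intro x hx
    obtain ⟨L, t, ht, hL⟩ := hlip (hKΩ hx)
    rw [nhdsWithin_eq_nhds.2 (hΩ.mem_nhds (hKΩ hx))] at ht
    refine ⟨interior t, interior_mem_nhds.2 ht, L, fun y hy => ?_⟩
    exact norm_fderiv_le_of_lipschitzOn ℝ (mem_interior_iff_mem_nhds.1 hy) hL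
  choose! s hs C hC using H
  obtain ⟨t, ht⟩ := hK.elim_nhds_subcover' (fun x _ => s x) (fun x hx => hs x hx)
  refine ⟨∑ x ∈ t, |C x.1|, Finset.sum_nonneg fun _ _ => abs_nonneg _, fun y hy => ?_⟩
  have hmem := ht hy
  rw [mem_iUnion₂] at hmem
  obtain ⟨x, hxt, hyx⟩ := hmem
  calc ‖fderiv ℝ u y‖ ≤ C x.1 := hC x.1 x.2 y hyx
    _ ≤ |C x.1| := le_abs_self _
    _ ≤ ∑ z ∈ t, |C z.1| := Finset.single_le_sum
        (f := fun z : ↥K => |C z.1|) (fun _ _ => abs_nonneg _) hxt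

lemma integral_fderiv_apply_eq_zero {g : E2 → ℝ} (hg : ContDiff ℝ 1 g)
    (hgs : HasCompactSupport g) (v : E2) :
    ∫ x, fderiv ℝ g x v = 0 := by
  have hc : Continuous (fun x => fderiv ℝ g x v) :=
    (hg.continuous_fderiv (by norm_num)).clm_apply continuous_const
  have hsup : HasCompactSupport (fun x => fderiv ℝ g x v) :=
    (hgs.fderiv ℝ).comp_left (g := fun L : E2 →L[ℝ] ℝ => L v) rfl
  have h1 : Integrable (fun x => fderiv ℝ g x v) volume :=
    hc.integrable_of_hasCompactSupport hsup
  have h2 : Integrable g volume :=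
    (hg.continuous).integrable_of_hasCompactSupport hgs
  have key := integral_mul_fderiv_eq_neg_fderiv_mul_of_integrable (μ := volume)
    (f := fun _ => (1:ℝ)) (g := g) (v := v) ?_ ?_ ?_ ?_ ?_
  · simpa using key
  · have heq : (fun x => fderiv ℝ (fun _ => (1:ℝ)) x v * g x) = fun _ => (0:ℝ) := by
      funext x; simp
    rw [heq]; exact integrable_zero _ _ _
  · simpa using h1
  · simpa using h2
  · exact fun x _ => differentiableAt_const 1
  · exact fun x _ => hg.differentiable (by norm_num) x

lemma pointwise_V {u φ : E2 → ℝ} {c : ℝ} (hc : 0 < c) {x : E2}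
    (hu2 : ContDiffAt ℝ 2 u x) (hφ : ContDiff ℝ (⊤ : ℕ∞) φ) (hφnn : ∀ y, 0 ≤ φ y)
    (hlap : ∑ i : Fin 2, fderiv ℝ (fun y => fderiv ℝ u y (EuclideanSpace.single i 1)) x
      (EuclideanSpace.single i 1) = 0) :
    Real.smoothTransition (c * u x - 1) *
        (∑ i : Fin 2, fderiv ℝ u x (EuclideanSpace.single i 1) *
          fderiv ℝ φ x (EuclideanSpace.single i 1)) ≤
      ∑ i : Fin 2, fderiv ℝ
        (fun y => (φ y * Real.smoothTransition (c * u y - 1)) *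
          fderiv ℝ u y (EuclideanSpace.single i 1)) x (EuclideanSpace.single i 1) := by
  classical
  set θ := Real.smoothTransition with hθdef
  set sx := c * u x - 1 with hsx
  have hdu : DifferentiableAt ℝ u x := hu2.differentiableAt (by norm_num)
  have hF : DifferentiableAt ℝ (fderiv ℝ u) x :=
    (hu2.fderiv_right (m := 1) (by norm_num)).differentiableAt (by norm_num)
  have hθd : HasDerivAt θ (deriv θ sx) sx :=
    (((Real.smoothTransition.contDiff (n := 1)).differentiable (by norm_num)) sx).hasDerivAt
  have hρ : HasFDerivAt (fun y => c * u y - 1) (c • fderiv ℝ u x) x :=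
    (hdu.hasFDerivAt.const_mul c).sub_const 1
  have hψ : HasFDerivAt (fun y => θ (c * u y - 1))
      (deriv θ sx • (c • fderiv ℝ u x)) x := by have := hθd.comp_hasFDerivAt x hρ; exact this
  have hφd : HasFDerivAt φ (fderiv ℝ φ x) x :=
    ((hφ.differentiable (by simp)) x).hasFDerivAt
  have hw : HasFDerivAt (fun y => φ y * θ (c * u y - 1))
      (φ x • (deriv θ sx • (c • fderiv ℝ u x)) + θ (c * u x - 1) • fderiv ℝ φ x) x :=
    hφd.mul hψ
  have hq : ∀ i : Fin 2, HasFDerivAt (fun y => fderiv ℝ u y (EuclideanSpace.single i 1))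
      (fderiv ℝ (fun y => fderiv ℝ u y (EuclideanSpace.single i 1)) x) x := by
    intro i
    refine DifferentiableAt.hasFDerivAt ?_
    exact (ContinuousLinearMap.apply ℝ ℝ
      (EuclideanSpace.single i (1:ℝ))).differentiable.differentiableAt.comp x hF
  have hfd : ∀ i : Fin 2, fderiv ℝ
      (fun y => (φ y * θ (c * u y - 1)) * fderiv ℝ u y (EuclideanSpace.single i 1)) x
        (EuclideanSpace.single i 1) =
      (φ x * θ sx) * fderiv ℝ (fun y => fderiv ℝ u y (EuclideanSpace.single i 1)) x
          (EuclideanSpace.single i 1)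
        + (φ x * (deriv θ sx * c)) *
            (fderiv ℝ u x (EuclideanSpace.single i 1) * fderiv ℝ u x (EuclideanSpace.single i 1))
        + θ sx * (fderiv ℝ u x (EuclideanSpace.single i 1) *
            fderiv ℝ φ x (EuclideanSpace.single i 1)) := by
    intro i
    rw [(hw.fun_mul (hq i)).fderiv]
    simp only [ContinuousLinearMap.add_apply, ContinuousLinearMap.smul_apply, smul_eq_mul, hsx]
    ring
  rw [Finset.sum_congr rfl (fun i _ => hfd i)]
  rw [Finset.sum_add_distrib, Finset.sum_add_distrib, ← Finset.mul_sum, ← Finset.mul_sum,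
    ← Finset.mul_sum, hlap, mul_zero, zero_add]
  have h1 : 0 ≤ (φ x * (deriv θ sx * c)) *
      ∑ i : Fin 2, fderiv ℝ u x (EuclideanSpace.single i 1) *
        fderiv ℝ u x (EuclideanSpace.single i 1) := by
    apply mul_nonneg
    · exact mul_nonneg (hφnn x) (mul_nonneg (monotone_deriv_nonneg smoothTransition_mono sx) hc.le)
    · exact Finset.sum_nonneg fun i _ => mul_self_nonneg _
  linarith


lemma gradient_zero_of_eventually_zero {f : E2 → ℝ} {y : E2} (h : f =ᶠ[𝓝 y] 0) :
    gradient f y = 0 := by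
  rw [h.gradient_eq]
  rw [gradient, show (0 : E2 → ℝ) = (fun _ => (0:ℝ)) from rfl, fderiv_fun_const]
  simp

lemma integrable_fderiv_apply {g : E2 → ℝ} (hg : ContDiff ℝ 1 g)
    (hgs : HasCompactSupport g) (v : E2) :
    Integrable (fun x => fderiv ℝ g x v) volume := by
  have hc : Continuous (fun x => fderiv ℝ g x v) :=
    (hg.continuous_fderiv (by norm_num)).clm_apply continuous_const
  have hsup : HasCompactSupport (fun x => fderiv ℝ g x v) :=
    (hgs.fderiv ℝ).comp_left (g := fun L : E2 →L[ℝ] ℝ => L v) rfl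
  exact hc.integrable_of_hasCompactSupport hsup

lemma key_c {Ω : Set E2} (hΩ : IsOpen Ω)
    {u : E2 → ℝ} (hu : Continuous u) (hnn : ∀ y, 0 ≤ u y)
    (hC2 : ContDiffOn ℝ 2 u (Ω ∩ {y | 0 < u y}))
    (hlap : ∀ x ∈ Ω ∩ {y | 0 < u y}, (∑ i : Fin 2,
      fderiv ℝ (fun y => fderiv ℝ u y (EuclideanSpace.single i 1)) x
        (EuclideanSpace.single i 1)) = 0)
    {φ : E2 → ℝ} (hφ : ContDiff ℝ (⊤ : ℕ∞) φ) (hφc : HasCompactSupport φ) (hφΩ : tsupport φ ⊆ Ω)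
    (hφnn : ∀ y, 0 ≤ φ y) {c : ℝ} (hc : 0 < c)
    (hInt : Integrable (fun y => ⟪gradient u y, gradient φ y⟫) volume) :
    ∫ y in Ω, Real.smoothTransition (c * u y - 1) * ⟪gradient u y, gradient φ y⟫ ≤ 0 := by
  classical
  set V := Ω ∩ {y | 0 < u y} with hV_def
  have hVopen : IsOpen V := hΩ.inter (isOpen_lt continuous_const hu)
  set T := tsupport φ ∩ {y | 1/c ≤ u y} with hT_def
  have hTclosed : IsClosed T := (isClosed_tsupport φ).inter (isClosed_le continuous_const hu)
  have hTcomp : IsCompact T := hφc.inter_right (isClosed_le continuous_const hu)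
  have hTV : T ⊆ V := by
    rintro y ⟨hyK, hyu⟩
    exact ⟨hφΩ hyK, lt_of_lt_of_le (one_div_pos.2 hc) hyu⟩
  have hwz : ∀ y ∉ T, φ y * Real.smoothTransition (c * u y - 1) = 0 := by
    intro y hy
    by_cases hyK : y ∈ tsupport φ
    · have h1 : ¬ (1/c ≤ u y) := fun hl => hy ⟨hyK, hl⟩
      push_neg at h1
      have h2 : c * u y - 1 ≤ 0 := by
        have h3 : u y * c < 1 := (lt_div_iff₀ hc).1 h1
        nlinarith
      rw [Real.smoothTransition.zero_of_nonpos h2, mul_zero]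
    · rw [image_eq_zero_of_notMem_tsupport hyK, zero_mul]
  set g : Fin 2 → E2 → ℝ := fun i y =>
    (φ y * Real.smoothTransition (c * u y - 1)) * fderiv ℝ u y (EuclideanSpace.single i 1)
    with hg_def
  have hgz : ∀ (i : Fin 2) (y : E2), y ∉ T → g i =ᶠ[𝓝 y] (fun _ => (0:ℝ)) := by
    intro i y hy
    filter_upwards [hTclosed.isOpen_compl.mem_nhds hy] with z hz
    simp only [hg_def]
    rw [hwz z hz, zero_mul]
  have hgsupp : ∀ i, HasCompactSupport (g i) := by
    intro i
    apply HasCompactSupport.intro hTcomp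
    intro y hy
    simp only [hg_def]
    rw [hwz y hy, zero_mul]
  have hgC1 : ∀ i, ContDiff ℝ 1 (g i) := by
    intro i
    rw [contDiff_iff_contDiffAt]
    intro x
    by_cases hx : x ∈ V
    · have hu2 : ContDiffAt ℝ 2 u x := hC2.contDiffAt (hVopen.mem_nhds hx)
      have h1 : ContDiffAt ℝ 1 φ x := (hφ.of_le (by simp)).contDiffAt
      have h2 : ContDiffAt ℝ 1 (fun y => Real.smoothTransition (c * u y - 1)) x :=
        Real.smoothTransition.contDiffAt.comp x
          ((contDiffAt_const.mul (hu2.of_le one_le_two)).sub contDiffAt_const)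
      have h3 : ContDiffAt ℝ 1 (fun y => fderiv ℝ u y (EuclideanSpace.single i 1)) x :=
        ((ContinuousLinearMap.apply ℝ ℝ
          (EuclideanSpace.single i (1:ℝ))).contDiff.contDiffAt).comp x
          (hu2.fderiv_right (m := 1) (by norm_num))
      exact (h1.mul h2).mul h3
    · exact (contDiffAt_const (c := (0:ℝ))).congr_of_eventuallyEq
        (hgz i x (fun hxT => hx (hTV hxT)))
  have hGi : ∀ i : Fin 2, Integrable
      (fun x => fderiv ℝ (g i) x (EuclideanSpace.single i 1)) volume :=
    fun i => integrable_fderiv_apply (hgC1 i) (hgsupp i) _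
  have hint0 : ∀ i : Fin 2, ∫ x, fderiv ℝ (g i) x (EuclideanSpace.single i 1) = 0 :=
    fun i => integral_fderiv_apply_eq_zero (hgC1 i) (hgsupp i) _
  have hGzero : ∀ y ∉ T, ∑ i : Fin 2, fderiv ℝ (g i) y (EuclideanSpace.single i 1) = 0 := by
    intro y hy
    refine Finset.sum_eq_zero fun i _ => ?_
    rw [(hgz i y hy).fderiv_eq, fderiv_fun_const]
    simp
  have hpt : ∀ y, Real.smoothTransition (c * u y - 1) * ⟪gradient u y, gradient φ y⟫ ≤
      ∑ i : Fin 2, fderiv ℝ (g i) y (EuclideanSpace.single i 1) := by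
    intro y
    by_cases hy : y ∈ V
    · have h := pointwise_V hc (hC2.contDiffAt (hVopen.mem_nhds hy)) hφ hφnn (hlap y hy)
      rw [inner_grad_grad]
      simpa only [hg_def] using h
    · have hyT : y ∉ T := fun hT => hy (hTV hT)
      rw [hGzero y hyT]
      rcases (hnn y).eq_or_lt with h0 | h0
      · rw [gradient_zero_at_min hnn h0.symm]
        simp
      · have hyΩ : y ∉ Ω := fun hΩy => hy ⟨hΩy, h0⟩
        have hyK : y ∉ tsupport φ := fun hK => hyΩ (hφΩ hK)
        have hgp : gradient φ y = 0 :=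
          gradient_zero_of_eventually_zero (notMem_tsupport_iff_eventuallyEq.1 hyK)
        rw [hgp]
        simp
  have hψcont : Continuous (fun y => Real.smoothTransition (c * u y - 1)) :=
    Real.smoothTransition.continuous.comp ((continuous_const.mul hu).sub continuous_const)
  have hψhInt : Integrable
      (fun y => Real.smoothTransition (c * u y - 1) * ⟪gradient u y, gradient φ y⟫) volume := by
    refine Integrable.mono' hInt.norm
      (hψcont.aestronglyMeasurable.mul hInt.aestronglyMeasurable)
      (Filter.Eventually.of_forall fun y => ?_)
    rw [norm_mul]
    have h1 : ‖Real.smoothTransition (c * u y - 1)‖ ≤ 1 := by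
      rw [Real.norm_eq_abs, abs_of_nonneg (Real.smoothTransition.nonneg _)]
      exact Real.smoothTransition.le_one _
    nlinarith [norm_nonneg (⟪gradient u y, gradient φ y⟫ : ℝ),
      norm_nonneg (Real.smoothTransition (c * u y - 1))]
  have hGint : Integrable
      (fun y => ∑ i : Fin 2, fderiv ℝ (g i) y (EuclideanSpace.single i 1)) volume :=
    integrable_finset_sum _ (fun i _ => hGi i)
  have hle : ∫ y in Ω, Real.smoothTransition (c * u y - 1) * ⟪gradient u y, gradient φ y⟫ ≤
      ∫ y in Ω, ∑ i : Fin 2, fderiv ℝ (g i) y (EuclideanSpace.single i 1) :=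
    setIntegral_mono_on hψhInt.integrableOn hGint.integrableOn hΩ.measurableSet
      (fun y _ => hpt y)
  have heq : ∫ y in Ω, ∑ i : Fin 2, fderiv ℝ (g i) y (EuclideanSpace.single i 1) =
      ∫ y, ∑ i : Fin 2, fderiv ℝ (g i) y (EuclideanSpace.single i 1) :=
    setIntegral_eq_integral_of_forall_compl_eq_zero
      (fun y hy => hGzero y (fun hT => hy (hφΩ hT.1)))
  have hzero : ∫ y, ∑ i : Fin 2, fderiv ℝ (g i) y (EuclideanSpace.single i 1) = 0 := by
    rw [integral_finset_sum _ (fun i _ => hGi i)]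
    exact Finset.sum_eq_zero fun i _ => hint0 i
  linarith


/-- `u` is distributionally subharmonic on `Ω` (Section 2.1):
`Δu` defines a non-negative Radon measure. -/
theorem distributionally_subharmonic
    (Ω : Set E2) (hΩ : IsOpen Ω)
    (u : E2 → ℝ) (hu : Continuous u) (hnn : ∀ y, 0 ≤ u y)
    (hlip : LocallyLipschitzOn Ω u)
    (hharm : HarmonicOn u (Ω ∩ {y | 0 < u y})) :
    ∀ φ : E2 → ℝ, ContDiff ℝ (⊤ : ℕ∞) φ → HasCompactSupport φ → tsupport φ ⊆ Ω →
      (∀ y, 0 ≤ φ y) →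
      0 ≤ -∫ y in Ω, ⟪gradient u y, gradient φ y⟫ := by
  intro φ hφ hφc hφΩ hφnn
  obtain ⟨hC2, hlap⟩ := hharm
  have hgradφc : Continuous (fun y => gradient φ y) := by
    have hsymm : Continuous fun L : E2 →L[ℝ] ℝ => (InnerProductSpace.toDual ℝ E2).symm L :=
      (InnerProductSpace.toDual ℝ E2).symm.continuous
    exact hsymm.comp (hφ.continuous_fderiv (by norm_num))
  have hgradum : Measurable (fun y => gradient u y) := by
    have hsymm : Continuous fun L : E2 →L[ℝ] ℝ => (InnerProductSpace.toDual ℝ E2).symm L :=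
      (InnerProductSpace.toDual ℝ E2).symm.continuous
    exact hsymm.measurable.comp (measurable_fderiv ℝ u)
  have hmeas : AEStronglyMeasurable (fun y => ⟪gradient u y, gradient φ y⟫) volume :=
    (hgradum.inner hgradφc.measurable).aestronglyMeasurable
  obtain ⟨Cu, hCu0, hCu⟩ := fderiv_bound_on_compact hΩ hlip hφc hφΩ
  obtain ⟨Cφ, hCφ⟩ := hφc.exists_bound_of_continuousOn hgradφc.continuousOn
  have hgradu_norm : ∀ y, ‖gradient u y‖ = ‖fderiv ℝ u y‖ := by
    intro y
    rw [gradient]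
    exact LinearIsometryEquiv.norm_map _ _
  have hInt : Integrable (fun y => ⟪gradient u y, gradient φ y⟫) volume := by
    refine Integrable.mono'
      (g := (tsupport φ).indicator (fun _ => Cu * Cφ)) ?_ hmeas
      (Filter.Eventually.of_forall fun y => ?_)
    · exact (integrable_indicator_iff (isClosed_tsupport φ).measurableSet).2
        (integrableOn_const hφc.measure_lt_top.ne)
    · by_cases hy : y ∈ tsupport φ
      · rw [indicator_of_mem hy]
        calc ‖(⟪gradient u y, gradient φ y⟫ : ℝ)‖
            ≤ ‖gradient u y‖ * ‖gradient φ y‖ := by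
              rw [Real.norm_eq_abs]; exact abs_real_inner_le_norm _ _
          _ ≤ Cu * Cφ := mul_le_mul (by rw [hgradu_norm]; exact hCu y hy)
              (hCφ y hy) (norm_nonneg _) hCu0
      · rw [indicator_of_notMem hy,
          gradient_zero_of_eventually_zero (notMem_tsupport_iff_eventuallyEq.1 hy)]
        simp
  have key : ∀ n : ℕ, ∫ y in Ω,
      Real.smoothTransition (((n:ℝ)+1) * u y - 1) * ⟪gradient u y, gradient φ y⟫ ≤ 0 :=
    fun n => key_c hΩ hu hnn hC2 hlap hφ hφc hφΩ hφnn (by positivity) hInt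
  have hconv : ∀ y : E2, Filter.Tendsto
      (fun n : ℕ => Real.smoothTransition (((n:ℝ)+1) * u y - 1) * ⟪gradient u y, gradient φ y⟫)
      Filter.atTop (𝓝 (⟪gradient u y, gradient φ y⟫)) := by
    intro y
    rcases (hnn y).eq_or_lt with h0 | h0
    · have hg0 : gradient u y = 0 := gradient_zero_at_min hnn h0.symm
      simp only [hg0, inner_zero_left, mul_zero]
      exact tendsto_const_nhds
    · refine Filter.Tendsto.congr' ?_ tendsto_const_nhds
      filter_upwards [Filter.eventually_ge_atTop ⌈2/u y⌉₊] with n hn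
      have h2 : (2:ℝ)/u y ≤ (n:ℝ) := le_trans (Nat.le_ceil _) (Nat.cast_le.2 hn)
      have h3 : (2:ℝ) ≤ (n:ℝ) * u y := by
        rw [div_le_iff₀ h0] at h2; linarith
      have h4 : (1:ℝ) ≤ ((n:ℝ)+1) * u y - 1 := by nlinarith
      rw [Real.smoothTransition.one_of_one_le h4, one_mul]
  have hψmeas : ∀ n : ℕ, AEStronglyMeasurable
      (fun y => Real.smoothTransition (((n:ℝ)+1) * u y - 1) * ⟪gradient u y, gradient φ y⟫)
      (volume.restrict Ω) := by
    intro n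
    exact ((Real.smoothTransition.continuous.comp
      ((continuous_const.mul hu).sub continuous_const)).aestronglyMeasurable.mul
      hmeas).restrict
  have htend : Filter.Tendsto (fun n : ℕ => ∫ y in Ω,
      Real.smoothTransition (((n:ℝ)+1) * u y - 1) * ⟪gradient u y, gradient φ y⟫)
      Filter.atTop (𝓝 (∫ y in Ω, ⟪gradient u y, gradient φ y⟫)) := by
    refine tendsto_integral_of_dominated_convergence
      (fun y => ‖(⟪gradient u y, gradient φ y⟫ : ℝ)‖) hψmeas
      hInt.norm.restrict (fun n => Filter.Eventually.of_forall fun y => ?_)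
      (Filter.Eventually.of_forall hconv)
    rw [norm_mul]
    have h1 : ‖Real.smoothTransition (((n:ℝ)+1) * u y - 1)‖ ≤ 1 := by
      rw [Real.norm_eq_abs, abs_of_nonneg (Real.smoothTransition.nonneg _)]
      exact Real.smoothTransition.le_one _
    nlinarith [norm_nonneg (⟪gradient u y, gradient φ y⟫ : ℝ),
      norm_nonneg (Real.smoothTransition (((n:ℝ)+1) * u y - 1))]
  have hfinal : ∫ y in Ω, ⟪gradient u y, gradient φ y⟫ ≤ 0 :=
    le_of_tendsto htend (Filter.Eventually.of_forall key)
  exact neg_nonneg.2 hfinal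
end
end
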